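/- Let d ≥ 2, r > 0, σ > 0, 0 ≤ ε_tr < r/2, 0 ≤ ε_te, and let D = {(x_i, y_i)}_{i=1}^n satisfy (x_i)_1 = y_i·r/2 with induced dataset linearly separable with margin γ̃ > 0, so that the ε_tr-robust max-ℓ2-margin solution with respect to the signal-directed perturbation sets is θ̂^{ε_tr} = (1/√((r − 2ε_tr)² + 4γ̃²))·(r − 2ε_tr, 2γ̃·θ̃). Then the ε_te-attack-susceptibility of θ̂^{ε_tr} on P_r equals Φ((r − 2ε_tr)(ε_te − r/2)/(2γ̃σ)) − Φ((r − 2ε_tr)(−ε_te − r/2)/(2γ̃σ)). -/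

import Mathlib

open MeasureTheory ProbabilityTheory Real Set
open scoped ENNReal BigOperators

noncomputable section

/-- Euclidean dot product on `Fin d → ℝ`. -/
def dot {d : ℕ} (u v : Fin d → ℝ) : ℝ := ∑ j, u j * v j

/-- Euclidean (`ℓ2`) norm on `Fin d → ℝ`. -/
def norm2 {d : ℕ} (u : Fin d → ℝ) : ℝ := Real.sqrt (∑ j, (u j) ^ 2)

/-- The (minimum) margin of the linear classifier `θ` on the dataset `{(x i, y i)}`. -/
def margin {d n : ℕ} (x : Fin n → Fin d → ℝ) (y : Fin n → ℝ) (θ : Fin d → ℝ) : ℝ :=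
  ⨅ i, y i * dot θ (x i)

/-- The isotropic Gaussian measure `N(0, σ² I_m)` on `ℝ^m`. -/
def gaussPi (m : ℕ) (σ : ℝ) : Measure (Fin m → ℝ) :=
  Measure.pi fun _ => gaussianReal 0 (Real.toNNReal (σ ^ 2))

/-- The data distribution `P_r` on `ℝ^{m+1} × {±1}`: the label `Y` is uniform on `{±1}`
and the covariate is `X = (Y · r/2, X̃)` with `X̃ ~ N(0, σ² I_m)`. -/
def Pdist (m : ℕ) (r σ : ℝ) : Measure ((Fin (m + 1) → ℝ) × ℝ) :=
  (2⁻¹ : ℝ≥0∞) • (gaussPi m σ).map (fun xt => ((Fin.cons (r / 2) xt : Fin (m + 1) → ℝ), (1 : ℝ)))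
    + (2⁻¹ : ℝ≥0∞) • (gaussPi m σ).map
        (fun xt => ((Fin.cons (-(r / 2)) xt : Fin (m + 1) → ℝ), (-1 : ℝ)))

/-- The standard normal cumulative distribution function `Φ`. -/
def stdGaussianCDF (z : ℝ) : ℝ := ((gaussianReal 0 1) (Iic z)).toReal

open scoped NNReal Matrix

/-!
Along `e₁` the score `θ ⬝ x` moves at rate `θ₀`, so a perturbation of size at most `ε` flips the
prediction exactly when `0 < |θ ⬝ X| < ε |θ₀|`. Given the label `Y`, the score is Gaussian with
mean `θ₀ Y r / 2` and standard deviation `σ ‖θ_{2:}‖`, so each label contributes a difference of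
two values of `Φ`; by `Φ(-z) = 1 - Φ(z)` the two contributions coincide. For `θ̂^{ε_tr}` the ratio
`θ₀ / ‖θ_{2:}‖` is `(r - 2ε_tr) / (2γ̃)`.
-/

lemma map_sum_mul_pi_gaussianReal {ι : Type*} [Fintype ι] (w : ι → ℝ) (v : ℝ≥0) :
    (Measure.pi fun _ : ι => gaussianReal 0 v).map (fun x => ∑ i, w i * x i)
      = gaussianReal 0 ((∑ i, w i ^ 2).toNNReal * v) := by
  refine Measure.ext_of_charFun (funext fun t => ?_)
  have hfactor : ∀ i, ∫ x, Complex.exp (↑(t * (w i * x)) * Complex.I) ∂gaussianReal 0 v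
      = Complex.exp (-((w i ^ 2 * v * t ^ 2 / 2 : ℝ) : ℂ)) := by
    intro i
    have := charFun_gaussianReal (μ := 0) (v := v) (t * w i)
    rw [charFun_apply_real] at this
    simp_rw [← mul_assoc]
    push_cast at this ⊢
    rw [this]
    congr 1
    ring
  have hsum : Continuous fun x : ι → ℝ => ∑ i, w i * x i := by fun_prop
  rw [charFun_apply_real, integral_map hsum.aemeasurable (by fun_prop), charFun_gaussianReal]
  simp_rw [← Complex.ofReal_mul, Finset.mul_sum, Complex.ofReal_sum, Finset.sum_mul,
    Complex.exp_sum]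
  rw [integral_fintype_prod_eq_prod (f := fun i x => Complex.exp (↑(t * (w i * x)) * Complex.I))]
  simp_rw [hfactor, ← Complex.exp_sum]
  congr 1
  push_cast [Real.coe_toNNReal _ (Finset.sum_nonneg fun i _ => sq_nonneg (w i))]
  simp only [Finset.sum_neg_distrib, ← Finset.sum_div, ← Finset.sum_mul]
  ring

lemma stdGaussianCDF_neg (z : ℝ) : stdGaussianCDF (-z) = 1 - stdGaussianCDF z := by
  have : NullSingletonClass (gaussianReal 0 1) := nullSingletonClass_gaussianReal one_ne_zero
  have hreflect : (gaussianReal 0 1).map (fun x => -x) = gaussianReal 0 1 := by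
    rw [gaussianReal_map_neg, neg_zero]
  calc stdGaussianCDF (-z) = ((gaussianReal 0 1).map (fun x => -x)).real (Iic (-z)) := by
        rw [hreflect, stdGaussianCDF, measureReal_def]
    _ = (gaussianReal 0 1).real (Ioi z)ᶜᶜ := by
        rw [map_measureReal_apply measurable_neg measurableSet_Iic, compl_compl,
          measureReal_congr Ioi_ae_eq_Ici]
        congr 1
        ext x
        simp
    _ = 1 - stdGaussianCDF z := by
        rw [probReal_compl_eq_one_sub measurableSet_Ioi.compl, compl_Ioi, stdGaussianCDF,
          measureReal_def]

lemma gaussianReal_real_Ioo {μ τ : ℝ} (hτ : 0 < τ) {l u : ℝ} (hlu : l ≤ u) :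
    (gaussianReal μ (τ ^ 2).toNNReal).real (Ioo l u)
      = stdGaussianCDF ((u - μ) / τ) - stdGaussianCDF ((l - μ) / τ) := by
  have : NullSingletonClass (gaussianReal 0 1) := nullSingletonClass_gaussianReal one_ne_zero
  have haffine : (gaussianReal 0 1).map (fun x => μ + τ * x) = gaussianReal μ (τ ^ 2).toNNReal := by
    rw [show (fun x => μ + τ * x) = (fun x => μ + x) ∘ (fun x => τ * x) from rfl,
      ← Measure.map_map (measurable_const_add μ) (measurable_const_mul τ),
      gaussianReal_map_const_mul, gaussianReal_map_const_add,
      Real.toNNReal_of_nonneg (sq_nonneg τ)]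
    simp
  have hpre : (fun x => μ + τ * x) ⁻¹' Ioo l u = Ioo ((l - μ) / τ) ((u - μ) / τ) := by
    ext x
    simp only [mem_preimage, mem_Ioo, div_lt_iff₀ hτ, lt_div_iff₀ hτ]
    constructor <;> rintro ⟨h1, h2⟩ <;> exact ⟨by linarith, by linarith⟩
  have hle : (l - μ) / τ ≤ (u - μ) / τ := by gcongr
  rw [← haffine, map_measureReal_apply (by fun_prop) measurableSet_Ioo, hpre,
    measureReal_congr Ioo_ae_eq_Ioc, ← Iic_sdiff_Iic, measureReal_sdiff (Iic_subset_Iic.2 hle)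
      measurableSet_Iic, stdGaussianCDF, stdGaussianCDF, measureReal_def, measureReal_def]

lemma dot_add_smul_single_zero {d : ℕ} (θ x : Fin (d + 1) → ℝ) (β : ℝ) :
    dot θ (x + β • Pi.single 0 1) = dot θ x + β * θ 0 := by
  change θ ⬝ᵥ (x + β • Pi.single 0 1) = θ ⬝ᵥ x + β * θ 0
  simp only [dotProduct_add, dotProduct_smul, dotProduct_single, smul_eq_mul]
  ring

lemma dot_cons {d : ℕ} (θ : Fin (d + 1) → ℝ) (v : ℝ) (xt : Fin d → ℝ) :
    dot θ (Fin.cons v xt) = θ 0 * v + ∑ j, Fin.tail θ j * xt j := by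
  simp [dot, Fin.sum_univ_succ, Fin.tail]

lemma norm2_smul {d : ℕ} (k : ℝ) (u : Fin d → ℝ) : norm2 (k • u) = |k| * norm2 u := by
  simp only [norm2, Pi.smul_apply, smul_eq_mul, mul_pow, ← Finset.mul_sum]
  rw [sqrt_mul (sq_nonneg k), sqrt_sq_eq_abs]

instance isProbabilityMeasure_gaussPi {m : ℕ} (σ : ℝ) : IsProbabilityMeasure (gaussPi m σ) := by
  unfold gaussPi
  infer_instance

lemma map_dot_cons_gaussPi {m : ℕ} (σ : ℝ) (θ : Fin (m + 1) → ℝ) (v : ℝ) :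
    (gaussPi m σ).map (fun xt => dot θ (Fin.cons v xt))
      = gaussianReal (θ 0 * v) ((σ * norm2 (Fin.tail θ)) ^ 2).toNNReal := by
  simp_rw [dot_cons]
  rw [show (fun xt : Fin m → ℝ => θ 0 * v + ∑ j, Fin.tail θ j * xt j)
      = (fun s => θ 0 * v + s) ∘ (fun xt : Fin m → ℝ => ∑ j, Fin.tail θ j * xt j) from rfl,
    ← Measure.map_map (measurable_const_add _) (by fun_prop), gaussPi,
    map_sum_mul_pi_gaussianReal, gaussianReal_map_const_add, zero_add, mul_pow, norm2,
    sq_sqrt (Finset.sum_nonneg fun j _ => sq_nonneg _), Real.toNNReal_mul (sq_nonneg σ)]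
  congr 1
  exact mul_comm _ _

lemma Pdist_real_preimage_fst {m : ℕ} (r σ : ℝ) {S : Set (Fin (m + 1) → ℝ)}
    (hS : MeasurableSet S) :
    (Pdist m r σ).real (Prod.fst ⁻¹' S)
      = ((gaussPi m σ).real ((fun xt => Fin.cons (r / 2) xt) ⁻¹' S)
          + (gaussPi m σ).real ((fun xt => Fin.cons (-(r / 2)) xt) ⁻¹' S)) / 2 := by
  have hcons : ∀ v : ℝ, Measurable fun xt : Fin m → ℝ => (Fin.cons v xt : Fin (m + 1) → ℝ) :=
    fun v => by fun_prop
  simp only [Pdist, measureReal_def, Measure.coe_add, Pi.add_apply, Measure.coe_smul,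
    Pi.smul_apply, smul_eq_mul]
  rw [Measure.map_apply ((hcons _).prodMk measurable_const) (measurable_fst hS),
    Measure.map_apply ((hcons _).prodMk measurable_const) (measurable_fst hS),
    ENNReal.toReal_add (by finiteness) (by finiteness), ENNReal.toReal_mul, ENNReal.toReal_mul]
  simp only [preimage_preimage, ENNReal.toReal_inv, ENNReal.toReal_ofNat]
  ring

lemma exists_abs_le_and_mul_add_mul_neg_iff {s t ε : ℝ} (hε : 0 ≤ ε) :
    (∃ β, |β| ≤ ε ∧ s * (s + β * t) < 0) ↔ s ≠ 0 ∧ |s| < ε * |t| := by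
  constructor
  · rintro ⟨β, hβ, hneg⟩
    have hs : s ≠ 0 := by rintro rfl; simp at hneg
    refine ⟨hs, lt_of_mul_lt_mul_left ?_ (abs_nonneg s)⟩
    calc |s| * |s| = s * s := abs_mul_abs_self s
      _ < -(s * β * t) := by linarith
      _ ≤ |s * β * t| := neg_le_abs _
      _ = |s| * |β| * |t| := by rw [abs_mul, abs_mul]
      _ ≤ |s| * (ε * |t|) := by rw [mul_assoc]; gcongr
  · rintro ⟨hs, hlt⟩
    have hsq : s * s < ε * |s * t| := by
      have := mul_lt_mul_of_pos_left hlt (abs_pos.2 hs)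
      rw [abs_mul_abs_self] at this
      rw [abs_mul]
      linarith
    -- move `s` towards `0` by the full amount `ε |t|`
    rcases le_total 0 (s * t) with hst | hst
    · refine ⟨-ε, by rw [abs_neg, abs_of_nonneg hε], ?_⟩
      rw [abs_of_nonneg hst] at hsq
      linarith
    · refine ⟨ε, (abs_of_nonneg hε).le, ?_⟩
      rw [abs_of_nonpos hst] at hsq
      linarith

def attackSet {m : ℕ} (θ : Fin (m + 1) → ℝ) (ε : ℝ) : Set ((Fin (m + 1) → ℝ) × ℝ) :=
  {p | ∃ β : ℝ, |β| ≤ ε ∧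
    (dot θ p.1) * (dot θ (p.1 + β • (Pi.single 0 1 : Fin (m + 1) → ℝ))) < 0}

lemma attackSet_eq_preimage {m : ℕ} (θ : Fin (m + 1) → ℝ) {ε : ℝ} (hε : 0 ≤ ε) :
    attackSet θ ε = Prod.fst ⁻¹' (dot θ ⁻¹' (Ioo (-(ε * |θ 0|)) (ε * |θ 0|) \ {0})) := by
  ext p
  simp only [attackSet, mem_ofPred_eq, mem_preimage, dot_add_smul_single_zero,
    exists_abs_le_and_mul_add_mul_neg_iff hε, mem_sdiff, mem_Ioo, mem_singleton_iff, abs_lt]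
  tauto

lemma gaussPi_real_cons_preimage_dot {m : ℕ} {σ k : ℝ} (θ : Fin (m + 1) → ℝ) (v : ℝ)
    (hσ : 0 < σ) (htail : 0 < norm2 (Fin.tail θ)) (hk : 0 ≤ k) :
    (gaussPi m σ).real ((fun xt => Fin.cons v xt) ⁻¹' (dot θ ⁻¹' (Ioo (-k) k \ {0})))
      = stdGaussianCDF ((k - θ 0 * v) / (σ * norm2 (Fin.tail θ)))
        - stdGaussianCDF ((-k - θ 0 * v) / (σ * norm2 (Fin.tail θ))) := by
  have hτ : 0 < σ * norm2 (Fin.tail θ) := mul_pos hσ htail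
  have : NullSingletonClass
      (gaussianReal (θ 0 * v) ((σ * norm2 (Fin.tail θ)) ^ 2).toNNReal) :=
    nullSingletonClass_gaussianReal (Real.toNNReal_pos.2 (pow_pos hτ 2)).ne'
  have hmeas : Measurable fun xt : Fin m → ℝ => dot θ (Fin.cons v xt) := by
    unfold dot; fun_prop
  change (gaussPi m σ).real ((fun xt => dot θ (Fin.cons v xt)) ⁻¹' (Ioo (-k) k \ {0})) = _
  rw [← map_measureReal_apply hmeas (measurableSet_Ioo.diff (measurableSet_singleton 0)),
    map_dot_cons_gaussPi, measureReal_sdiff_null (by simp [measureReal_def]),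
    gaussianReal_real_Ioo hτ (neg_le_self hk)]

theorem Pdist_real_attackSet {m : ℕ} {r σ ε : ℝ} (θ : Fin (m + 1) → ℝ) (hσ : 0 < σ)
    (hε : 0 ≤ ε) (htail : 0 < norm2 (Fin.tail θ)) :
    (Pdist m r σ).real (attackSet θ ε)
      = stdGaussianCDF (|θ 0| * (ε - r / 2) / (σ * norm2 (Fin.tail θ)))
        - stdGaussianCDF (|θ 0| * (-ε - r / 2) / (σ * norm2 (Fin.tail θ))) := by
  set τ := σ * norm2 (Fin.tail θ)
  set k := ε * |θ 0|
  have hdot : Measurable (dot θ) := by unfold dot; fun_prop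
  set F : ℝ → ℝ := fun μ => stdGaussianCDF ((k - μ) / τ) - stdGaussianCDF ((-k - μ) / τ)
  have heven : ∀ μ, F (-μ) = F μ := by
    intro μ
    simp only [F]
    rw [show (k - -μ) / τ = -((-k - μ) / τ) by ring, show (-k - -μ) / τ = -((k - μ) / τ) by ring,
      stdGaussianCDF_neg, stdGaussianCDF_neg]
    ring
  have hsign : F (θ 0 * (r / 2)) = F (|θ 0| * (r / 2)) := by
    rcases abs_choice (θ 0) with h | h <;> rw [h]
    rw [neg_mul, heven]
  rw [attackSet_eq_preimage θ hε, Pdist_real_preimage_fst r σ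
      (hdot (measurableSet_Ioo.diff (measurableSet_singleton 0))),
    gaussPi_real_cons_preimage_dot θ _ hσ htail (by positivity),
    gaussPi_real_cons_preimage_dot θ _ hσ htail (by positivity)]
  change (F (θ 0 * (r / 2)) + F (θ 0 * -(r / 2))) / 2 = _
  rw [show θ 0 * -(r / 2) = -(θ 0 * (r / 2)) by ring, heven, add_self_div_two, hsign]
  simp only [F, k]
  congr 2 <;> ring

theorem susceptibility_of_robust_max_margin_general
    {m : ℕ} (r σ εtr εte : ℝ) (hσ : 0 < σ)
    (hεtr2 : εtr < r / 2) (hεte : 0 ≤ εte)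
    (θt : Fin m → ℝ) (γt : ℝ)
    (hθt_norm : norm2 θt = 1)
    (hγt_pos : 0 < γt) :
    ∀ θhat : Fin (m + 1) → ℝ,
      θhat = (Real.sqrt ((r - 2 * εtr) ^ 2 + 4 * γt ^ 2))⁻¹ •
        (Fin.cons (r - 2 * εtr) ((2 * γt) • θt) : Fin (m + 1) → ℝ) →
      ((Pdist m r σ) {p | ∃ β : ℝ, |β| ≤ εte ∧
          (dot θhat p.1) * (dot θhat (p.1 + β • (Pi.single 0 1 : Fin (m + 1) → ℝ))) < 0}).toReal
        = stdGaussianCDF ((r - 2 * εtr) * (εte - r / 2) / (2 * γt * σ))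
          - stdGaussianCDF ((r - 2 * εtr) * (-εte - r / 2) / (2 * γt * σ)) := by
  intro θhat hθhat
  set c := Real.sqrt ((r - 2 * εtr) ^ 2 + 4 * γt ^ 2)
  have hc : 0 < c := Real.sqrt_pos.2 (by positivity)
  have hhead : θhat 0 = c⁻¹ * (r - 2 * εtr) := by simp [hθhat]
  have htail : Fin.tail θhat = (c⁻¹ * (2 * γt)) • θt := by
    ext j
    simp [hθhat, Fin.tail, mul_assoc]
  have hnorm : norm2 (Fin.tail θhat) = c⁻¹ * (2 * γt) := by
    rw [htail, norm2_smul, hθt_norm, mul_one, abs_of_pos (by positivity)]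
  change (Pdist m r σ).real (attackSet θhat εte) = _
  rw [Pdist_real_attackSet θhat hσ hεte (by rw [hnorm]; positivity), hnorm, hhead,
    abs_of_pos (mul_pos (inv_pos.2 hc) (by linarith))]
  congr 2 <;> field_simp

/-- Under the hypotheses of Statement 4, the `ε_te`-attack-susceptibility
on `P_r` of the `ε_tr`-robust max-`ℓ2`-margin solution
`θ̂^{ε_tr} = (1/√((r − 2ε_tr)² + 4γ̃²)) • (r − 2ε_tr, 2γ̃ θ̃)` (the probability that the
prediction changes sign under some signal-directed perturbation of size at most `ε_te`)
equals `Φ((r − 2ε_tr)(ε_te − r/2)/(2γ̃σ)) − Φ((r − 2ε_tr)(−ε_te − r/2)/(2γ̃σ))`. -/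
theorem susceptibility_of_robust_max_margin
    {m n : ℕ} (hm : 1 ≤ m) (hn : 0 < n) (r σ εtr εte : ℝ) (hr : 0 < r) (hσ : 0 < σ)
    (hεtr : 0 ≤ εtr) (hεtr2 : εtr < r / 2) (hεte : 0 ≤ εte)
    (x : Fin n → Fin (m + 1) → ℝ) (y : Fin n → ℝ)
    (hy : ∀ i, y i = 1 ∨ y i = -1)
    (hx1 : ∀ i, x i 0 = y i * (r / 2))
    (θt : Fin m → ℝ) (γt : ℝ)
    (hθt_norm : norm2 θt = 1)
    (hγt : γt = margin (fun i => Fin.tail (x i)) y θt)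
    (hγt_pos : 0 < γt)
    (hθt_max : ∀ θ : Fin m → ℝ, norm2 θ ≤ 1 →
      margin (fun i => Fin.tail (x i)) y θ ≤ γt) :
    ∀ θhat : Fin (m + 1) → ℝ,
      θhat = (Real.sqrt ((r - 2 * εtr) ^ 2 + 4 * γt ^ 2))⁻¹ •
        (Fin.cons (r - 2 * εtr) ((2 * γt) • θt) : Fin (m + 1) → ℝ) →
      ((Pdist m r σ) {p | ∃ β : ℝ, |β| ≤ εte ∧
          (dot θhat p.1) * (dot θhat (p.1 + β • (Pi.single 0 1 : Fin (m + 1) → ℝ))) < 0}).toReal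
        = stdGaussianCDF ((r - 2 * εtr) * (εte - r / 2) / (2 * γt * σ))
          - stdGaussianCDF ((r - 2 * εtr) * (-εte - r / 2) / (2 * γt * σ)) :=
  susceptibility_of_robust_max_margin_general r σ εtr εte hσ hεtr2 hεte θt γt hθt_norm hγt_pos

end
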